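/- arXiv:1708.03000 — 2 statements merged into one kernel-verified Lean document; each statement's English description precedes it below -/
import Mathlib

section
/- There is no injective linear map φ : ℤ⁴ → ℤ⁶ such that, with respect to the negative of the standard inner product on ℤ⁶ (i.e. ⟨x,y⟩ = -∑ xᵢyᵢ), the images e₁ = φ(b₁), e₂ = φ(b₂), e₃ = φ(b₃), e₄ = φ(b₄) of the standard basis satisfy ⟨eᵢ,eᵢ⟩ = -3 for all i, ⟨e₁,e₂⟩ = ⟨e₂,e₃⟩ = ⟨e₃,e₄⟩ = ⟨e₄,e₁⟩ = 1, and ⟨e₁,e₃⟩ = ⟨e₂,e₄⟩ = 0. -/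
/-!
Write `a, b, c, d` for the images of the basis vectors and use the positive pairing. Having norm 3,
they have entries in `{-1, 0, 1}`. The vector `a + b` has norm 4 and odd pairing with `c`, so it is
not `±2` times a unit vector: its entries lie in `{-1, 0, 1}` too, and likewise for the other
adjacent sums and for `a + b + c + d` (norm 4, pairing 1 with `a`). Hence every coordinate row
`(aᵢ, bᵢ, cᵢ, dᵢ)` is, up to sign, one of sixteen patterns, and the Gram matrix becomes a system of
linear equations in the numbers of rows of each pattern, whose solutions need at least seven rows.
-/

/-- The negative of the standard inner product on `Fin n → ℤ`. -/
def negPairing {n : ℕ} (x y : Fin n → ℤ) : ℤ := -∑ i, x i * y i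

open Matrix Finset

/-- The Goeritz form of `8₁₈` with the sign reversed, as a circulant matrix. -/
def cycleGram : Matrix (Fin 4) (Fin 4) ℤ := of fun j k => ![3, -1, 0, -1] (k - j)

/-- Representatives up to sign of the rows in `{-1, 0, 1}⁴` in which no two cyclically adjacent
entries are equal and nonzero and whose entries sum to at most `1` in absolute value: the zero row,
the unit rows, the adjacent and the opposite pairs `(1, -1)`, the rows missing one index, and the
alternating row. -/
def rowPattern : Fin 16 → Fin 4 → ℤ :=
  ![![0, 0, 0, 0],
    ![1, 0, 0, 0], ![0, 1, 0, 0], ![0, 0, 1, 0], ![0, 0, 0, 1],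
    ![1, -1, 0, 0], ![0, 1, -1, 0], ![0, 0, 1, -1], ![1, 0, 0, -1],
    ![1, 0, -1, 0], ![0, 1, 0, -1],
    ![0, 1, -1, 1], ![1, 0, 1, -1], ![1, -1, 0, -1], ![1, -1, 1, 0],
    ![1, -1, 1, -1]]

lemma coe_sign_eq_self_of_abs_le_one {x : ℤ} (hx : |x| ≤ 1) :
    ((SignType.sign x : SignType) : ℤ) = x := by
  obtain rfl | rfl | rfl : x = -1 ∨ x = 0 ∨ x = 1 := by rw [abs_le] at hx; omega
  all_goals simp

lemma exists_rowPattern {t : Fin 4 → ℤ} (h₁ : ∀ j, |t j| ≤ 1) (h₂ : ∀ j, |t j + t (j + 1)| ≤ 1)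
    (h₃ : |∑ j, t j| ≤ 1) : ∃ p, t = rowPattern p ∨ t = -rowPattern p := by
  have key : ∀ σ : Fin 4 → SignType, (∀ j, |(σ j : ℤ) + σ (j + 1)| ≤ 1) →
      |∑ j, (σ j : ℤ)| ≤ 1 →
      ∃ p, (fun j => (σ j : ℤ)) = rowPattern p ∨ (fun j => (σ j : ℤ)) = -rowPattern p := by
    decide +kernel
  have ht : ∀ j, ((SignType.sign (t j) : SignType) : ℤ) = t j :=
    fun j => coe_sign_eq_self_of_abs_le_one (h₁ j)
  simpa only [ht] using
    key (fun j => SignType.sign (t j)) (by simpa only [ht]) (by simpa only [ht])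

/- With at most six rows, the diagonal and adjacent equations leave no room for zero,
adjacent-pair or alternating rows and force exactly two rows missing one index. By the adjacent
equations these miss two opposite indices, so both contain the other opposite pair, say `b, d`,
with `bᵢ = dᵢ`; then `b ⬝ᵥ d = 0` needs two more rows where `b` and `d` are nonzero, and `b` has
four nonzero entries. -/
lemma six_lt_sum_of_sum_rowPattern_eq_cycleGram (N : Fin 16 → ℕ)
    (hN : ∀ j k, ∑ q, (N q : ℤ) * (rowPattern q j * rowPattern q k) = cycleGram j k) :
    6 < ∑ q, N q := by
  have h00 := hN 0 0
  have h11 := hN 1 1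
  have h22 := hN 2 2
  have h33 := hN 3 3
  have h01 := hN 0 1
  have h12 := hN 1 2
  have h23 := hN 2 3
  have h30 := hN 3 0
  have h02 := hN 0 2
  have h13 := hN 1 3
  simp only [Fin.sum_univ_succ, Fin.sum_univ_zero, rowPattern, cycleGram, of_apply,
    Matrix.cons_val, Fin.reduceSucc, Fin.reduceSub, mul_one, mul_zero, mul_neg, neg_neg, add_zero]
    at h00 h11 h22 h33 h01 h12 h23 h30 h02 h13 ⊢
  omega

section

variable {ι : Type*} [Fintype ι]

lemma mul_self_le_dotProduct_self (v : ι → ℤ) (i : ι) : v i * v i ≤ v ⬝ᵥ v :=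
  single_le_sum (f := fun j => v j * v j) (fun j _ => mul_self_nonneg (v j)) (mem_univ i)

lemma abs_le_one_of_dotProduct_self_lt_four {v : ι → ℤ} (hv : v ⬝ᵥ v < 4) (i : ι) :
    |v i| ≤ 1 := by
  nlinarith [mul_self_le_dotProduct_self v i, abs_mul_abs_self (v i), abs_nonneg (v i)]

/- A vector of norm 4 with an entry `±2` is `±2` times a unit vector, so all its pairings
are even. -/
lemma abs_le_one_of_dotProduct_self_eq_four {s w : ι → ℤ} (hs : s ⬝ᵥ s = 4)
    (hw : Odd (s ⬝ᵥ w)) (i : ι) : |s i| ≤ 1 := by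
  classical
  by_contra! hi
  have hsi : s i * s i = 4 := by
    have := mul_self_le_dotProduct_self s i
    nlinarith [abs_mul_abs_self (s i)]
  have hzero : ∀ j ∈ univ.erase i, s j * s j = 0 := by
    refine (sum_eq_zero_iff_of_nonneg fun j _ => mul_self_nonneg (s j)).1 ?_
    have := add_sum_erase univ (fun j => s j * s j) (mem_univ i)
    rw [← dotProduct, hs, hsi] at this
    linarith
  have hsw : s ⬝ᵥ w = s i * w i :=
    sum_eq_single i (fun j _ hj => by
      rw [mul_self_eq_zero.1 (hzero j (mem_erase.2 ⟨hj, mem_univ j⟩)), zero_mul]) (by simp)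
  have hodd : Odd (s i) := (Int.odd_mul.1 (hsw ▸ hw)).1
  have := hodd.mul hodd
  rw [hsi] at this
  exact absurd this (by decide)

lemma sum_comp_eq_sum_card_nsmul {κ M : Type*} [Fintype κ] [DecidableEq κ] [AddCommMonoid M]
    (p : ι → κ) (f : κ → M) : ∑ i, f (p i) = ∑ q, #{i | p i = q} • f q := by
  simp only [← sum_fiberwise' univ p f, sum_const]

lemma dotProduct_eq_cycleGram {v : Fin 4 → ι → ℤ} (hdiag : ∀ j, v j ⬝ᵥ v j = 3)
    (hadj : ∀ j, v j ⬝ᵥ v (j + 1) = -1) (hopp : ∀ j, v j ⬝ᵥ v (j + 2) = 0) (j k : Fin 4) :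
    v j ⬝ᵥ v k = cycleGram j k := by
  obtain ⟨d, rfl⟩ : ∃ d, k = j + d := ⟨k - j, (add_sub_cancel j k).symm⟩
  simp only [cycleGram, of_apply, add_sub_cancel_left]
  fin_cases d
  · simpa using hdiag j
  · exact hadj j
  · exact hopp j
  · rw [dotProduct_comm, ← hadj (j + 3), show j + 3 + 1 = j by omega]
    rfl

lemma abs_add_succ_le_one {v : Fin 4 → ι → ℤ} (hv : ∀ j k, v j ⬝ᵥ v k = cycleGram j k)
    (j : Fin 4) (i : ι) : |v j i + v (j + 1) i| ≤ 1 := by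
  refine abs_le_one_of_dotProduct_self_eq_four (s := v j + v (j + 1)) (w := v (j + 2)) ?_ ?_ i
  · simp only [add_dotProduct, dotProduct_add, hv]
    fin_cases j <;> decide
  · simp only [add_dotProduct, hv]
    fin_cases j <;> decide

lemma abs_sum_le_one {v : Fin 4 → ι → ℤ} (hv : ∀ j k, v j ⬝ᵥ v k = cycleGram j k) (i : ι) :
    |∑ j, v j i| ≤ 1 := by
  have hsum : (∑ j, v j) ⬝ᵥ (∑ j, v j) = 4 := by
    simp only [sum_dotProduct, dotProduct_sum, hv]
    decide
  have hodd : Odd ((∑ j, v j) ⬝ᵥ v 0) := by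
    simp only [sum_dotProduct, hv]
    decide
  simpa only [Finset.sum_apply] using abs_le_one_of_dotProduct_self_eq_four hsum hodd i

lemma six_lt_card_of_dotProduct_eq_cycleGram (v : Fin 4 → ι → ℤ)
    (hv : ∀ j k, v j ⬝ᵥ v k = cycleGram j k) : 6 < Fintype.card ι := by
  classical
  have hrow : ∀ i, ∃ p, (fun j => v j i) = rowPattern p ∨ (fun j => v j i) = -rowPattern p :=
    fun i => exists_rowPattern
      (fun j => abs_le_one_of_dotProduct_self_lt_four (by rw [hv]; fin_cases j <;> decide) i)
      (fun j => abs_add_succ_le_one hv j i) (abs_sum_le_one hv i)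
  choose p hp using hrow
  have hentry : ∀ i j k, v j i * v k i = rowPattern (p i) j * rowPattern (p i) k := by
    intro i j k
    rcases hp i with h | h
    · rw [show v j i = _ from congrFun h j, show v k i = _ from congrFun h k]
    · rw [show v j i = _ from congrFun h j, show v k i = _ from congrFun h k, Pi.neg_apply,
        Pi.neg_apply, neg_mul_neg]
  have hcount := six_lt_sum_of_sum_rowPattern_eq_cycleGram (fun q => #{i | p i = q})
    fun j k => by
      simp only [← nsmul_eq_mul]
      rw [← hv, ← sum_comp_eq_sum_card_nsmul p (fun q => rowPattern q j * rowPattern q k)]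
      exact sum_congr rfl fun i _ => (hentry i j k).symm
  rwa [← card_eq_sum_card_fiberwise (fun i _ => mem_univ (p i)), card_univ] at hcount

end

/-- The rank-4 Goeritz form of the knot 8₁₈ (a 4-cycle of `-3`-vertices) does not
embed isometrically into the negative definite diagonal lattice `(ℤ⁶, -Id)`. -/
theorem stmt_0 :
    ¬ ∃ φ : (Fin 4 → ℤ) →ₗ[ℤ] (Fin 6 → ℤ),
      Function.Injective φ ∧
      (∀ i : Fin 4, negPairing (φ (Pi.single i 1)) (φ (Pi.single i 1)) = -3) ∧
      negPairing (φ (Pi.single 0 1)) (φ (Pi.single 1 1)) = 1 ∧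
      negPairing (φ (Pi.single 1 1)) (φ (Pi.single 2 1)) = 1 ∧
      negPairing (φ (Pi.single 2 1)) (φ (Pi.single 3 1)) = 1 ∧
      negPairing (φ (Pi.single 3 1)) (φ (Pi.single 0 1)) = 1 ∧
      negPairing (φ (Pi.single 0 1)) (φ (Pi.single 2 1)) = 0 ∧
      negPairing (φ (Pi.single 1 1)) (φ (Pi.single 3 1)) = 0 := by
  rintro ⟨φ, -, hdiag, h01, h12, h23, h30, h02, h13⟩
  have hadj : ∀ j : Fin 4, φ (Pi.single j 1) ⬝ᵥ φ (Pi.single (j + 1) 1) = -1 := by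
    intro j
    fin_cases j
    exacts [neg_eq_iff_eq_neg.1 h01, neg_eq_iff_eq_neg.1 h12, neg_eq_iff_eq_neg.1 h23,
      neg_eq_iff_eq_neg.1 h30]
  have hopp : ∀ j : Fin 4, φ (Pi.single j 1) ⬝ᵥ φ (Pi.single (j + 2) 1) = 0 := by
    intro j
    fin_cases j
    exacts [neg_eq_zero.1 h02, neg_eq_zero.1 h13, (dotProduct_comm _ _).trans (neg_eq_zero.1 h02),
      (dotProduct_comm _ _).trans (neg_eq_zero.1 h13)]
  have hv := dotProduct_eq_cycleGram (fun j => neg_inj.1 (hdiag j)) hadj hopp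
  simpa using six_lt_card_of_dotProduct_eq_cycleGram _ hv
end

section
/- There is no injective linear map φ : ℤ⁸ → ℤ⁸ preserving pairings, where the source carries the bilinear form with basis e₁,…,e₈ satisfying eᵢ·eᵢ = -2 for i = 1,…,6, e₇·e₇ = -3, e₈·e₈ = -15, eᵢ·e_{i+1} = 1 for i = 1,…,6, e₈·eⱼ = 0 for j ≤ 7, and all other pairings of distinct basis vectors zero, and the target carries the negative of the standard inner product on ℤ⁸. -/
/-!
The suffix sums `s_i = e_i + ⋯ + e_7` (`1 ≤ i ≤ 7`) of the chain have square `-3` and pairwise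
products `-2`, so an embedding would give seven vectors of `ℤ⁸` of norm `3` with pairwise inner
products `2`. Such vectors have entries in `{0, ±1}` and, as their differences have norm `2`, never
opposite signs in a common coordinate; hence their supports are `3`-sets meeting pairwise in exactly
`2` points. Writing every such set as `A \ {a} ∪ {b}` for a fixed member `A`, two members agree in
exactly one of `a`, `b`, so either all share `b` (at most `3` others, inside a `4`-set) or all share
`a` and have distinct `b ∉ A` (at most `5` others). That allows only `6` vectors in `ℤ⁸`.
-/

open Finset Matrix Function

/-- Gram matrix of the Goeritz form of `-9₂` (a chain `-2,…,-2,-3`) direct sum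
with `[-15]`. -/
def gram9_2 : Fin 8 → Fin 8 → ℤ := fun i j =>
  if i = j then (if (i : ℕ) < 6 then -2 else if (i : ℕ) = 6 then -3 else -15)
  else if ((i : ℕ) + 1 = (j : ℕ) ∧ (j : ℕ) ≤ 6) ∨ ((j : ℕ) + 1 = (i : ℕ) ∧ (i : ℕ) ≤ 6)
    then 1 else 0

theorem Function.injective_or_injective_of_eq_iff_ne {ι α β : Type*} {f : ι → α} {g : ι → β}
    (h : ∀ i j, i ≠ j → (f i = f j ↔ g i ≠ g j)) : Injective f ∨ Injective g := by
  by_contra! hfg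
  obtain ⟨⟨i, j, hfij, hij⟩, ⟨k, l, hgkl, hkl⟩⟩ :
      (∃ i j, f i = f j ∧ i ≠ j) ∧ ∃ k l, g k = g l ∧ k ≠ l := by
    simpa [Injective] using hfg
  have hgij : g i ≠ g j := (h i j hij).1 hfij
  have hf_const : ∀ m, f m = f i := by
    intro m
    by_contra hm
    have hmi : m ≠ i := by rintro rfl; exact hm rfl
    have hmj : m ≠ j := by rintro rfl; exact hm hfij.symm
    have hgmi : g m = g i := not_not.1 (mt (h m i hmi).2 hm)
    have hgmj : g m = g j := not_not.1 (mt (h m j hmj).2 (hfij ▸ hm))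
    exact hgij (hgmi.symm.trans hgmj)
  exact (h k l hkl).1 ((hf_const k).trans (hf_const l).symm) hgkl

namespace Finset

variable {α : Type*} [DecidableEq α]

theorem exists_eq_insert_erase_of_card_inter {A B : Finset α} {k : ℕ}
    (hA : #A = k + 1) (hB : #B = k + 1) (hAB : #(A ∩ B) = k) :
    ∃ a ∈ A, ∃ b ∉ A, B = insert b (A.erase a) := by
  obtain ⟨a, ha⟩ := card_eq_one.1 (by rw [card_sdiff, inter_comm]; omega : #(A \ B) = 1)
  obtain ⟨b, hb⟩ := card_eq_one.1 (by rw [card_sdiff]; omega : #(B \ A) = 1)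
  have haA : a ∈ A \ B := ha ▸ mem_singleton_self a
  have hbB : b ∈ B \ A := hb ▸ mem_singleton_self b
  rw [mem_sdiff] at haA hbB
  refine ⟨a, haA.1, b, hbB.2, ext fun x => ?_⟩
  have hxa := Finset.ext_iff.1 ha x
  have hxb := Finset.ext_iff.1 hb x
  simp only [mem_sdiff, mem_singleton] at hxa hxb
  simp only [mem_insert, mem_erase]
  grind

theorem eq_iff_ne_of_card_inter_insert_erase {A : Finset α} {a a' b c : α}
    (ha : a ∈ A) (ha' : a' ∈ A) (hb : b ∉ A) (hc : c ∉ A)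
    (h : #(insert b (A.erase a) ∩ insert c (A.erase a')) + 1 = #A) : a = a' ↔ b ≠ c := by
  have hA : 0 < #A := card_pos.2 ⟨a, ha⟩
  constructor
  · rintro rfl rfl
    rw [inter_self, card_insert_of_notMem (fun hb' => hb (mem_of_mem_erase hb')),
      card_erase_of_mem ha] at h
    omega
  · intro hbc
    by_contra haa'
    have hinter : insert b (A.erase a) ∩ insert c (A.erase a') = (A.erase a).erase a' := by
      ext x
      simp only [mem_inter, mem_insert, mem_erase]
      grind
    rw [hinter, card_erase_of_mem (mem_erase.2 ⟨Ne.symm haa', ha'⟩), card_erase_of_mem ha] at h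
    have : 1 < #A := one_lt_card.2 ⟨a, ha, a', ha', haa'⟩
    omega

theorem card_le_of_card_inter_eq {ι : Type*} [Fintype ι] [Fintype α] {k : ℕ} (A : ι → Finset α)
    (hA : ∀ i, #(A i) = k + 1) (hAA : ∀ i j, i ≠ j → #(A i ∩ A j) = k) :
    Fintype.card ι ≤ max (k + 2) (Fintype.card α - k) := by
  classical
  rcases isEmpty_or_nonempty ι with hι | ⟨⟨i₀⟩⟩
  · simp
  have hι : Fintype.card {i // i ≠ i₀} = Fintype.card ι - 1 := by
    simp [Fintype.card_subtype_compl]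
  have hpos : 0 < Fintype.card ι := Fintype.card_pos_iff.2 ⟨i₀⟩
  choose a ha b hb hAab using fun i : {i // i ≠ i₀} =>
    exists_eq_insert_erase_of_card_inter (hA i₀) (hA i) (hAA i₀ i (Ne.symm i.2))
  have hab : ∀ i j, i ≠ j → (a i = a j ↔ b i ≠ b j) := fun i j hij =>
    eq_iff_ne_of_card_inter_insert_erase (ha i) (ha j) (hb i) (hb j) <| by
      rw [← hAab, ← hAab, hAA i j (Subtype.coe_ne_coe.2 hij), hA]
  rcases injective_or_injective_of_eq_iff_ne hab with hinj | hinj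
  · have := card_le_card_of_injOn a (s := univ) (fun i _ => ha i) hinj.injOn
    rw [card_univ, hι, hA] at this
    omega
  · have := card_le_card_of_injOn b (s := univ) (t := (A i₀)ᶜ)
      (fun i _ => mem_compl.2 (hb i)) hinj.injOn
    rw [card_univ, hι, card_compl, hA] at this
    omega

end Finset

theorem mul_eq_ite_of_mul_self_le {x y : ℤ} (hx : x * x ≤ 3) (hy : y * y ≤ 3)
    (hxy : (x - y) * (x - y) ≤ 2) : x * y = if x ≠ 0 ∧ y ≠ 0 then 1 else 0 := by
  obtain ⟨hx₁, hx₂⟩ : -1 ≤ x ∧ x ≤ 1 := by constructor <;> nlinarith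
  obtain ⟨hy₁, hy₂⟩ : -1 ≤ y ∧ y ≤ 1 := by constructor <;> nlinarith
  interval_cases x <;> interval_cases y <;> simp_all

theorem dotProduct_eq_card_inter_support {ι α : Type*} [DecidableEq ι] [Fintype α] [DecidableEq α]
    (z : ι → α → ℤ) (hz : ∀ i j, z i ⬝ᵥ z j = if i = j then 3 else 2) (i j : ι) :
    z i ⬝ᵥ z j = #(({k | z i k ≠ 0} : Finset α) ∩ ({k | z j k ≠ 0} : Finset α)) := by
  have hle : ∀ (x : α → ℤ) k, x k * x k ≤ x ⬝ᵥ x := fun x k =>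
    single_le_sum (f := fun m => x m * x m) (fun m _ => mul_self_nonneg (x m)) (mem_univ k)
  have hdiff : (z i - z j) ⬝ᵥ (z i - z j) ≤ 2 := by
    simp only [sub_dotProduct, dotProduct_sub, hz]
    split_ifs <;> simp_all
  rw [← filter_and, natCast_card_filter, dotProduct]
  refine sum_congr rfl fun k _ => mul_eq_ite_of_mul_self_le ?_ ?_ ?_
  · simpa [hz] using hle (z i) k
  · simpa [hz] using hle (z j) k
  · exact (hle (z i - z j) k).trans hdiff

theorem card_le_of_dotProduct_eq_ite {ι α : Type*} [Fintype ι] [DecidableEq ι] [Fintype α]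
    (z : ι → α → ℤ) (hz : ∀ i j, z i ⬝ᵥ z j = if i = j then 3 else 2) :
    Fintype.card ι ≤ max 4 (Fintype.card α - 2) := by
  classical
  have hcard := dotProduct_eq_card_inter_support z hz
  refine card_le_of_card_inter_eq (k := 2) (fun i => ({k | z i k ≠ 0} : Finset α))
    (fun i => ?_) fun i j hij => ?_
  · have := hcard i i
    rw [hz, if_pos rfl, inter_self] at this
    omega
  · have := hcard i j
    rw [hz, if_neg hij] at this
    omega

def suffixSums : Matrix (Fin 7) (Fin 8) ℤ :=
  of fun i a => if i ≤ (a : ℕ) ∧ (a : ℕ) < 7 then 1 else 0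

theorem suffixSums_mul_neg_gram9_2_mul_transpose :
    suffixSums * (-of gram9_2) * suffixSumsᵀ = of fun i j => if i = j then 3 else 2 := by
  decide

/-- The Goeritz form of `-9₂` plus a rank-one form `[-15]` does not embed into
the diagonal negative definite lattice `(ℤ⁸, -Id)`. -/
theorem stmt_8 :
    ¬ ∃ φ : (Fin 8 → ℤ) →ₗ[ℤ] (Fin 8 → ℤ),
      Function.Injective φ ∧
      ∀ i j : Fin 8, negPairing (φ (Pi.single i 1)) (φ (Pi.single j 1)) = gram9_2 i j := by
  rintro ⟨φ, -, hφ⟩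
  let V : Matrix (Fin 8) (Fin 8) ℤ := fun a => φ (Pi.single a 1)
  have hV : V * Vᵀ = -of gram9_2 := by
    ext i j
    rw [neg_apply, of_apply, ← hφ, negPairing, neg_neg]
    rfl
  have hZ : (suffixSums * V) * (suffixSums * V)ᵀ = of fun i j => if i = j then 3 else 2 := by
    rw [transpose_mul, Matrix.mul_assoc, ← Matrix.mul_assoc V, hV, ← Matrix.mul_assoc,
      suffixSums_mul_neg_gram9_2_mul_transpose]
  have := card_le_of_dotProduct_eq_ite (suffixSums * V) fun i j => congrFun (congrFun hZ i) j
  simp at this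
end
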